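/- arXiv:1105.5774 — 2 statements merged into one kernel-verified Lean document; each statement's English description precedes it below -/
import Mathlib

section
/- Let ε < 0 and s₀ be real numbers, and define γ(x) = (x + s₀)·((x + s₀)³ + ε²)^(−1/3) on the open set of real x where (x + s₀)³ + ε² > 0. Then for every such x, γ satisfies the equation 1 − 2·γ(x)³ + γ(x)⁶ + ε·(γ′(x))^(3/2) = 0, where γ′ is the derivative of γ (note γ′(x) = ε²·((x+s₀)³+ε²)^(−4/3) ≥ 0, so the 3/2-power is the real power of a nonnegative real). -/
/-!
With `u = x + s₀` and `A = u³ + ε²`, the product rule collapses to `γ' = ε² A^(-4/3)`, because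
`A - u³ = ε²`. Hence `γ³ = u³ / A`, so `1 - 2γ³ + γ⁶ = (1 - γ³)² = ε⁴ / A²`, while
`(γ')^(3/2) = |ε|³ / A²`, and `ε |ε|³ = -ε⁴` since `ε ≤ 0`.
-/

open Real

lemma hasDerivAt_mul_cube_add_rpow_neg_third {c t : ℝ} (h : t ^ 3 + c ≠ 0) :
    HasDerivAt (fun t : ℝ => t * (t ^ 3 + c) ^ (-(1 / 3) : ℝ))
      (c * (t ^ 3 + c) ^ (-(4 / 3) : ℝ)) t := by
  have hA : HasDerivAt (fun t : ℝ => t ^ 3 + c) (3 * t ^ 2) t := by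
    simpa using (hasDerivAt_pow 3 t).add_const c
  refine ((hasDerivAt_id t).mul ((hasDerivAt_rpow_const (Or.inl h)).comp t hA)).congr_deriv ?_
  have hsplit : (t ^ 3 + c) ^ (-(1 / 3) : ℝ) = (t ^ 3 + c) ^ (-(4 / 3) : ℝ) * (t ^ 3 + c) := by
    rw [← rpow_add_one h]; norm_num
  rw [show (-(1 / 3) : ℝ) - 1 = -(4 / 3) by norm_num, Function.comp_apply, id_eq, hsplit]
  ring

lemma mul_rpow_neg_third_pow_three {t A : ℝ} (hA : 0 ≤ A) :
    (t * A ^ (-(1 / 3) : ℝ)) ^ 3 = t ^ 3 / A := by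
  rw [mul_pow, ← rpow_natCast (A ^ _), ← rpow_mul hA]
  norm_num [rpow_neg_one, div_eq_mul_inv]

lemma sq_mul_rpow_neg_four_thirds_rpow_three_halves (c : ℝ) {A : ℝ} (hA : 0 ≤ A) :
    (c ^ 2 * A ^ (-(4 / 3) : ℝ)) ^ ((3 : ℝ) / 2) = |c| ^ 3 / A ^ 2 := by
  have hc : (c ^ 2) ^ ((3 : ℝ) / 2) = |c| ^ 3 := by
    rw [← sq_abs, ← rpow_natCast, ← rpow_mul (abs_nonneg c)]; norm_num
  have hA' : (A ^ (-(4 / 3) : ℝ)) ^ ((3 : ℝ) / 2) = (A ^ 2)⁻¹ := by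
    rw [← rpow_mul hA]; norm_num
  rw [mul_rpow (sq_nonneg c) (rpow_nonneg hA _), hc, hA', div_eq_mul_inv]

/-- γ(x) = (x+s₀)·((x+s₀)³+ε²)^(−1/3) solves
    1 − 2γ³ + γ⁶ + ε·(γ′)^{3/2} = 0 wherever (x+s₀)³+ε² > 0. -/
theorem gamma_solves_ode (ε s₀ : ℝ) (hε : ε < 0)
    (γ : ℝ → ℝ)
    (hγ : ∀ x : ℝ, γ x = (x + s₀) * ((x + s₀) ^ 3 + ε ^ 2) ^ (-(1 / 3) : ℝ)) :
    ∀ x : ℝ, (x + s₀) ^ 3 + ε ^ 2 > 0 →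
      1 - 2 * (γ x) ^ 3 + (γ x) ^ 6 + ε * (deriv γ x) ^ ((3 : ℝ) / 2) = 0 := by
  intro x hx
  have hderiv : deriv γ x = ε ^ 2 * ((x + s₀) ^ 3 + ε ^ 2) ^ (-(4 / 3) : ℝ) := by
    rw [funext hγ]
    exact ((hasDerivAt_mul_cube_add_rpow_neg_third hx.ne').comp_add_const x s₀).deriv
  have hcube : γ x ^ 3 = (x + s₀) ^ 3 / ((x + s₀) ^ 3 + ε ^ 2) := by
    rw [hγ, mul_rpow_neg_third_pow_three hx.le]
  rw [show γ x ^ 6 = (γ x ^ 3) ^ 2 by ring, hcube, hderiv,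
    sq_mul_rpow_neg_four_thirds_rpow_three_halves ε hx.le, abs_of_neg hε]
  field_simp
  ring
end

section
/- Fix a real parameter ε < 0 and a real x > 0. Then the limit as z → 0 (z ≠ 0) of χ₀(x,z) − 1/z exists and equals 28/x³ − (ε²x³ + x⁶)/5832. -/
/-- κ(x,z) = (ε² + x³)z³ − x³ -/
noncomputable def kappa (ε x z : ℝ) : ℝ := (ε ^ 2 + x ^ 3) * z ^ 3 - x ^ 3

/-- w(z) = √(1 − 2z³ − (ε⁴/3888)z⁴ + z⁶) -/
noncomputable def wfun (ε z : ℝ) : ℝ :=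
  Real.sqrt (1 - 2 * z ^ 3 - (ε ^ 4 / 3888) * z ^ 4 + z ^ 6)

/-- χ₀(x,z) from Corollary 2.3. -/
noncomputable def chi0 (ε x z : ℝ) : ℝ :=
  1 / (2 * z) - x ^ 3 * (ε ^ 2 + x ^ 3) / 5832 + 10 * (z ^ 3 - 1) / kappa ε x z
    + ε ^ 2 * x ^ 3 * z / (216 * kappa ε x z)
    - (108 * wfun ε z + ε ^ 2 * z ^ 2) / (6 * kappa ε x z)
    - x ^ 3 * wfun ε z / (2 * kappa ε x z * z)
    + 16 * ε ^ 2 * z ^ 3 / (kappa ε x z * x ^ 3)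

/-!
The only singular terms of `χ₀ − 1/z` at `z = 0` are `−1/(2z) − x³ w / (2κz)
= −(κ + x³ w) / (2κz)`, and `κ + x³ w = (ε² + x³) z³ + x³ (w − 1)`. Rationalising,
`w − 1 = (w² − 1)/(w + 1)` and `w² − 1 = z³ (−2 − (ε⁴/3888) z + z³)`, so the quotient by `z`
is `O(z²)`. Hence `χ₀ − 1/z` agrees near `0` with a function continuous at `0`, whose value
there (`κ(x,0) = −x³`, `w(0) = 1`) is the claimed constant.
-/

open Filter Topology

lemma Real.sqrt_sub_one_eq_div {r : ℝ} (hr : 0 ≤ r) : √r - 1 = (r - 1) / (√r + 1) := by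
  have hpos : √r + 1 ≠ 0 := by positivity
  rw [eq_div_iff hpos]
  linear_combination Real.sq_sqrt hr

namespace Chi0

variable (ε x : ℝ)

noncomputable def radicand (z : ℝ) : ℝ := 1 - 2 * z ^ 3 - (ε ^ 4 / 3888) * z ^ 4 + z ^ 6

noncomputable def regular (z : ℝ) : ℝ :=
  -(((ε ^ 2 + x ^ 3) * z ^ 2
        + x ^ 3 * z ^ 2 * (-2 - (ε ^ 4 / 3888) * z + z ^ 3) / (wfun ε z + 1))
      / (2 * kappa ε x z))
    - x ^ 3 * (ε ^ 2 + x ^ 3) / 5832 + 10 * (z ^ 3 - 1) / kappa ε x z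
    + ε ^ 2 * x ^ 3 * z / (216 * kappa ε x z)
    - (108 * wfun ε z + ε ^ 2 * z ^ 2) / (6 * kappa ε x z)
    + 16 * ε ^ 2 * z ^ 3 / (kappa ε x z * x ^ 3)

lemma wfun_eq_sqrt_radicand (z : ℝ) : wfun ε z = √(radicand ε z) := rfl

lemma wfun_zero : wfun ε 0 = 1 := by simp [wfun]

lemma kappa_zero : kappa ε x 0 = -x ^ 3 := by simp [kappa]

lemma continuous_radicand : Continuous (radicand ε) := by
  unfold radicand; fun_prop

lemma continuous_wfun : Continuous (wfun ε) := (continuous_radicand ε).sqrt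

lemma continuous_kappa : Continuous (kappa ε x) := by
  unfold kappa; fun_prop

lemma wfun_sub_one {z : ℝ} (hz : 0 ≤ radicand ε z) :
    wfun ε z - 1 = z ^ 3 * (-2 - (ε ^ 4 / 3888) * z + z ^ 3) / (wfun ε z + 1) := by
  rw [wfun_eq_sqrt_radicand, Real.sqrt_sub_one_eq_div hz, radicand]
  ring

lemma chi0_sub_inv_eq_regular {z : ℝ} (hz : z ≠ 0) (hκ : kappa ε x z ≠ 0)
    (hr : 0 ≤ radicand ε z) : chi0 ε x z - 1 / z = regular ε x z := by
  have hw := wfun_sub_one ε hr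
  have hw1 : wfun ε z + 1 ≠ 0 := by rw [wfun_eq_sqrt_radicand]; positivity
  have hsingular : 1 / (2 * z) - 1 / z - x ^ 3 * wfun ε z / (2 * kappa ε x z * z)
      = -(((ε ^ 2 + x ^ 3) * z ^ 2
            + x ^ 3 * z ^ 2 * (-2 - (ε ^ 4 / 3888) * z + z ^ 3) / (wfun ε z + 1))
          / (2 * kappa ε x z)) :=
    calc _ = -((kappa ε x z + x ^ 3 * wfun ε z) / (2 * kappa ε x z * z)) := by
          field_simp; ring
      _ = -(((ε ^ 2 + x ^ 3) * z ^ 3 + x ^ 3 * (wfun ε z - 1)) / (2 * kappa ε x z * z)) := by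
          rw [kappa]; ring
      _ = _ := by
          rw [hw]; field_simp
  simp only [chi0, regular]
  linear_combination hsingular

lemma eventually_kappa_ne_zero (hx : x ≠ 0) : ∀ᶠ z in 𝓝 0, kappa ε x z ≠ 0 :=
  (continuous_kappa ε x).continuousAt.eventually_ne (by simpa [kappa_zero] using hx)

lemma eventually_radicand_pos : ∀ᶠ z in 𝓝 0, 0 < radicand ε z :=
  (continuous_radicand ε).continuousAt.eventually_const_lt (by norm_num [radicand])

lemma chi0_sub_inv_eventuallyEq_regular (hx : x ≠ 0) :
    (fun z => chi0 ε x z - 1 / z) =ᶠ[𝓝[{z | z ≠ 0}] 0] regular ε x := by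
  filter_upwards [nhdsWithin_le_nhds (eventually_kappa_ne_zero ε x hx),
    nhdsWithin_le_nhds (eventually_radicand_pos ε), self_mem_nhdsWithin] with z hκ hr hz
  exact chi0_sub_inv_eq_regular ε x hz hκ hr.le

lemma continuousAt_regular (hx : x ≠ 0) : ContinuousAt (regular ε x) 0 := by
  have hw := continuous_wfun ε
  have hκ := continuous_kappa ε x
  have hw1 : wfun ε 0 + 1 ≠ 0 := by norm_num [wfun_zero]
  have hκ0 : kappa ε x 0 ≠ 0 := by simpa [kappa_zero] using hx
  unfold regular
  fun_prop (disch := first | exact hw1 | exact hκ0 | simp [hκ0, hx])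

lemma regular_zero (hx : x ≠ 0) :
    regular ε x 0 = 28 / x ^ 3 - (ε ^ 2 * x ^ 3 + x ^ 6) / 5832 := by
  simp only [regular, kappa_zero, wfun_zero]
  field_simp
  ring

end Chi0

theorem chi0_constant_term_general (ε x : ℝ) (hx : 0 < x) :
    Filter.Tendsto (fun z : ℝ => chi0 ε x z - 1 / z)
      (nhdsWithin 0 {z : ℝ | z ≠ 0})
      (nhds (28 / x ^ 3 - (ε ^ 2 * x ^ 3 + x ^ 6) / 5832)) := by
  rw [← Chi0.regular_zero ε x hx.ne']
  exact ((Chi0.continuousAt_regular ε x hx.ne').tendsto.mono_left nhdsWithin_le_nhds).congr'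
    (Chi0.chi0_sub_inv_eventuallyEq_regular ε x hx.ne').symm

/-- χ₀(x,z) − 1/z → 28/x³ − (ε²x³ + x⁶)/5832 as z → 0, z ≠ 0. -/
theorem chi0_constant_term (ε x : ℝ) (hε : ε < 0) (hx : 0 < x) :
    Filter.Tendsto (fun z : ℝ => chi0 ε x z - 1 / z)
      (nhdsWithin 0 {z : ℝ | z ≠ 0})
      (nhds (28 / x ^ 3 - (ε ^ 2 * x ^ 3 + x ^ 6) / 5832)) :=
  chi0_constant_term_general ε x hx
end
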